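/- Let ρ be a faithful (positive definite, trace 1) multipartite density matrix on configurations (i : ι) → d i, let c : ι → κ be a map into a finite type κ, let σ_marg be the product of single-site marginals of ρ, and let σ_blocks be the product of block marginals of ρ determined by c. Then S(ρ ‖ σ_marg) = S(σ_blocks ‖ σ_marg) + S(ρ ‖ σ_blocks). -/

import Mathlib

open Matrix ComplexOrder

/-- The matrix logarithm of a Hermitian matrix, obtained by applying `Real.log`
through the functional calculus for Hermitian matrices (`Matrix.IsHermitian.cfc`).
Junk value `0` on non-Hermitian matrices. -/
noncomputable def matLog {n : Type*} [Fintype n] [DecidableEq n]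
    (A : Matrix n n ℂ) : Matrix n n ℂ :=
  if h : A.IsHermitian then h.cfc Real.log else 0

/-- Von Neumann entropy `S(ρ) = -tr(ρ log ρ)` of a (faithful) density matrix. -/
noncomputable def vnEnt {n : Type*} [Fintype n] [DecidableEq n]
    (ρ : Matrix n n ℂ) : ℝ :=
  -((ρ * matLog ρ).trace).re

/-- Quantum relative entropy `S(ρ‖σ) = tr(ρ log ρ) - tr(ρ log σ)` of faithful
density matrices. -/
noncomputable def relEnt {n : Type*} [Fintype n] [DecidableEq n]
    (ρ σ : Matrix n n ℂ) : ℝ :=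
  ((ρ * matLog ρ).trace).re - ((ρ * matLog σ).trace).re

/-- The single-site marginal at site `i` of a multipartite matrix. -/
noncomputable def siteMarg {ι : Type*} [Fintype ι] [DecidableEq ι]
    {d : ι → Type*} [∀ i, Fintype (d i)] [∀ i, DecidableEq (d i)]
    (ρ : Matrix ((i : ι) → d i) ((i : ι) → d i) ℂ) (i : ι) : Matrix (d i) (d i) ℂ :=
  fun a b => ∑ x : (j : ι) → d j, if x i = a then ρ x (Function.update x i b) else 0

/-- The product of the single-site marginals of a multipartite matrix. -/
noncomputable def prodMarg {ι : Type*} [Fintype ι] [DecidableEq ι]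
    {d : ι → Type*} [∀ i, Fintype (d i)] [∀ i, DecidableEq (d i)]
    (ρ : Matrix ((i : ι) → d i) ((i : ι) → d i) ℂ) :
    Matrix ((i : ι) → d i) ((i : ι) → d i) ℂ :=
  fun x y => ∏ i, siteMarg ρ i (x i) (y i)

/-- The block-marginal kernel of a multipartite matrix at block `k` of the grouping `c`:
the partial trace of `ρ` over the sites outside the block `c⁻¹(k)`, viewed as a kernel on
full configurations which depends only on their values on the block. -/
noncomputable def blockMargKernel {ι κ : Type*} [Fintype ι] [DecidableEq ι] [DecidableEq κ]
    {d : ι → Type*} [∀ i, Fintype (d i)] [∀ i, DecidableEq (d i)]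
    (ρ : Matrix ((i : ι) → d i) ((i : ι) → d i) ℂ) (c : ι → κ) (k : κ) :
    Matrix ((i : ι) → d i) ((i : ι) → d i) ℂ :=
  fun x y => ∑ z : (i : ι) → d i,
    if ∀ i, c i = k → z i = x i then ρ z (fun i => if c i = k then y i else z i) else 0

/-- The product of the block marginals of a multipartite matrix, for the grouping of
sites given by `c`. -/
noncomputable def prodBlockMarg {ι κ : Type*} [Fintype ι] [DecidableEq ι]
    [Fintype κ] [DecidableEq κ]
    {d : ι → Type*} [∀ i, Fintype (d i)] [∀ i, DecidableEq (d i)]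
    (ρ : Matrix ((i : ι) → d i) ((i : ι) → d i) ℂ) (c : ι → κ) :
    Matrix ((i : ι) → d i) ((i : ι) → d i) ℂ :=
  fun x y => ∏ k, blockMargKernel ρ c k x y

/-!
Both product states are Kronecker products of faithful marginals, so their logarithms split as
sums of single-factor observables `1 ⊗ ⋯ ⊗ log σₖ ⊗ ⋯ ⊗ 1`. Since the partial trace is dual to
tensoring with the identity, a state of trace one and the product of its marginals give every
single-factor observable the same expectation. Regrouping the sites into blocks turns each site
observable into a block observable, whence `tr (ρ log σ_blocks) = tr (σ_blocks log σ_blocks)` and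
`tr (ρ log σ_marg) = tr (σ_blocks log σ_marg)`; the decomposition is then a linear identity
between the defining traces.
-/

open scoped Kronecker

namespace Matrix

section PiKron
variable {K R : Type*} [Fintype K] [CommSemiring R] {A B C : K → Type*}

def piKron (M : ∀ k, Matrix (A k) (B k) R) : Matrix (∀ k, A k) (∀ k, B k) R :=
  of fun x y => ∏ k, M k (x k) (y k)

@[simp]
lemma piKron_apply (M : ∀ k, Matrix (A k) (B k) R) (x : ∀ k, A k) (y : ∀ k, B k) :
    piKron M x y = ∏ k, M k (x k) (y k) := rfl

lemma piKron_mul [DecidableEq K] [∀ k, Fintype (B k)] (M : ∀ k, Matrix (A k) (B k) R)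
    (N : ∀ k, Matrix (B k) (C k) R) :
    piKron M * piKron N = piKron fun k => M k * N k := by
  ext x z
  simp only [mul_apply, piKron_apply, ← Finset.prod_mul_distrib]
  rw [Finset.prod_univ_sum, Fintype.piFinset_univ]

lemma piKron_diagonal [DecidableEq K] [∀ k, DecidableEq (B k)] (d : ∀ k, B k → R) :
    piKron (fun k => diagonal (d k)) = diagonal fun x => ∏ k, d k (x k) := by
  ext x y
  simp [diagonal_apply, Finset.prod_ite_zero, funext_iff]

lemma piKron_one [DecidableEq K] [∀ k, DecidableEq (B k)] :
    piKron (fun k => (1 : Matrix (B k) (B k) R)) = 1 := by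
  simpa [diagonal_one] using piKron_diagonal (B := B) (fun _ _ => (1 : R))

lemma piKron_mulSingle_diagonal [DecidableEq K] [∀ k, DecidableEq (B k)] (k : K)
    (h : B k → R) : piKron (Pi.mulSingle k (diagonal h)) = diagonal fun x => h (x k) := by
  have : (Pi.mulSingle k (diagonal h) : ∀ j, Matrix (B j) (B j) R)
      = fun j => diagonal ((Pi.mulSingle k h : ∀ j, B j → R) j) := by
    funext j
    rcases eq_or_ne j k with rfl | hj
    · simp
    · simp [Pi.mulSingle_eq_of_ne hj]
  rw [this, piKron_diagonal]
  congr 1 with x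
  rw [Fintype.prod_eq_single k fun j hj => by simp [Pi.mulSingle_eq_of_ne hj],
    Pi.mulSingle_eq_same]

lemma conjTranspose_piKron [StarRing R] (M : ∀ k, Matrix (A k) (B k) R) :
    (piKron M)ᴴ = piKron fun k => (M k)ᴴ := by
  ext x y
  simp [star_prod]

lemma isHermitian_piKron [StarRing R] {M : ∀ k, Matrix (B k) (B k) R}
    (hM : ∀ k, (M k).IsHermitian) : (piKron M).IsHermitian := by
  rw [IsHermitian, conjTranspose_piKron]
  exact congrArg piKron (funext hM)

lemma piKron_mem_unitary [DecidableEq K] [StarRing R] [∀ k, Fintype (B k)]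
    [∀ k, DecidableEq (B k)] {U : ∀ k, Matrix (B k) (B k) R}
    (hU : ∀ k, U k ∈ unitary (Matrix (B k) (B k) R)) :
    piKron U ∈ unitary (Matrix (∀ k, B k) (∀ k, B k) R) := by
  simp only [Unitary.mem_iff, star_eq_conjTranspose, conjTranspose_piKron, piKron_mul] at hU ⊢
  simp only [fun k => (hU k).1, fun k => (hU k).2, piKron_one, and_self]

lemma trace_piKron [DecidableEq K] [∀ k, Fintype (A k)] (M : ∀ k, Matrix (A k) (A k) R) :
    (piKron M).trace = ∏ k, (M k).trace := by
  simp only [trace, diag_apply, piKron_apply]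
  rw [Finset.prod_univ_sum, Fintype.piFinset_univ]

lemma piKron_submatrix_piSplitAt [DecidableEq K] (k : K) (M : ∀ k, Matrix (A k) (B k) R) :
    (piKron M).submatrix (Equiv.piSplitAt k A).symm (Equiv.piSplitAt k B).symm
      = M k ⊗ₖ piKron fun j : {j // j ≠ k} => M j := by
  ext ⟨a, v⟩ ⟨b, w⟩
  simp only [submatrix_apply, piKron_apply, kroneckerMap_apply,
    Fintype.prod_eq_mul_prod_subtype_ne _ k]
  congr 1
  · simp
  · exact Finset.prod_congr rfl fun j _ => by simp [j.2]

end PiKron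

lemma trace_submatrix_equiv {m n R : Type*} [Fintype m] [Fintype n] [AddCommMonoid R]
    (A : Matrix n n R) (e : m ≃ n) : (A.submatrix e e).trace = A.trace :=
  e.sum_comp fun i => A i i

lemma submatrix_sum {ι l m n o R : Type*} [AddCommMonoid R] (s : Finset ι)
    (A : ι → Matrix m n R) (r : l → m) (c : o → n) :
    (∑ i ∈ s, A i).submatrix r c = ∑ i ∈ s, (A i).submatrix r c := by
  ext
  simp [sum_apply]

def reindexStarAlgEquiv {m n : Type*} (R : Type*) {α : Type*} [Fintype m] [DecidableEq m]
    [Fintype n] [DecidableEq n] [CommSemiring R] [Semiring α] [Algebra R α] [StarRing α]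
    (e : m ≃ n) : Matrix m m α ≃⋆ₐ[R] Matrix n n α :=
  { reindexAlgEquiv R α e with
    map_smul' := fun _ _ => rfl
    map_star' := fun A => (conjTranspose_submatrix A _ _).symm }

section PartialTrace
variable {m p R : Type*} [Fintype p]

def partialTraceSnd [AddCommMonoid R] (A : Matrix (m × p) (m × p) R) : Matrix m m R :=
  of fun a b => ∑ w, A (a, w) (b, w)

lemma partialTraceSnd_eq_sum_submatrix [AddCommMonoid R] (A : Matrix (m × p) (m × p) R) :
    partialTraceSnd A = ∑ w, A.submatrix (·, w) (·, w) := by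
  ext a b
  simp [partialTraceSnd, sum_apply]

lemma trace_partialTraceSnd [Fintype m] [AddCommMonoid R] (A : Matrix (m × p) (m × p) R) :
    (partialTraceSnd A).trace = A.trace := by
  simp [trace, partialTraceSnd, Fintype.sum_prod_type]

lemma partialTraceSnd_kronecker [CommSemiring R] (M : Matrix m m R) (N : Matrix p p R) :
    partialTraceSnd (M ⊗ₖ N) = N.trace • M := by
  ext a b
  simp [partialTraceSnd, trace, Finset.mul_sum, mul_comm]

lemma trace_mul_kronecker_one [Fintype m] [DecidableEq p] [CommSemiring R]
    (A : Matrix (m × p) (m × p) R) (g : Matrix m m R) :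
    (A * (g ⊗ₖ 1)).trace = (partialTraceSnd A * g).trace := by
  simp only [trace, diag_apply, mul_apply, kroneckerMap_apply, one_apply, mul_ite, mul_one,
    mul_zero, Fintype.sum_prod_type, Finset.sum_ite_eq', Finset.mem_univ, ↓reduceIte,
    partialTraceSnd, of_apply, Finset.sum_mul]
  exact Finset.sum_congr rfl fun _ _ => Finset.sum_comm

lemma PosDef.partialTraceSnd [Nonempty p] [CommRing R] [PartialOrder R] [StarRing R]
    [IsOrderedRing R] {A : Matrix (m × p) (m × p) R} (hA : A.PosDef) :
    (partialTraceSnd A).PosDef := by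
  rw [partialTraceSnd_eq_sum_submatrix]
  exact posDef_sum Finset.univ_nonempty fun w _ =>
    hA.submatrix fun a b h => congrArg Prod.fst h

end PartialTrace

open Polynomial in
lemma cfc_diagonal {n : Type*} [Fintype n] [DecidableEq n] (f : ℝ → ℝ) (g : n → ℝ) :
    cfc f (diagonal fun i => (g i : ℂ)) = diagonal fun i => (f (g i) : ℂ) := by
  -- `f` only matters on the spectrum `Set.range g`, where it agrees with a polynomial.
  set p := Lagrange.interpolate (Finset.univ.image g) id f
  have hp : ∀ i, p.eval (g i) = f (g i) := fun i =>
    Lagrange.eval_interpolate_at_node f Function.injective_id.injOn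
      (Finset.mem_image_of_mem g (Finset.mem_univ i))
  have hD : IsSelfAdjoint (diagonal fun i => (g i : ℂ)) := by
    simp [IsSelfAdjoint, star_eq_conjTranspose, diagonal_conjTranspose]
  rw [cfc_congr (g := fun x => p.eval x), cfc_polynomial p _ hD]
  · rw [← diagonalAlgHom_apply ℝ, aeval_algHom_apply, diagonalAlgHom_apply]
    congr 1 with i
    rw [aeval_pi_apply₂, ← hp, ← Complex.coe_algebraMap,
      aeval_algebraMap_apply_eq_algebraMap_eval]
  · intro x hx
    rw [← spectrum.algebraMap_mem_iff ℂ, spectrum_diagonal] at hx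
    obtain ⟨i, hi⟩ := hx
    rw [Complex.coe_algebraMap, Complex.ofReal_inj] at hi
    simp [← hi, hp]

end Matrix

lemma Equiv.update_piSplitAt_symm_apply {K : Type*} [DecidableEq K] {B : K → Type*} (k : K)
    (a b : B k) (w : ∀ j : {j // j ≠ k}, B j) :
    Function.update ((piSplitAt k B).symm (a, w)) k b = (piSplitAt k B).symm (b, w) := by
  rw [eq_symm_apply]
  ext j
  · simp
  · simp [j.2]

section SiteMarg
variable {K : Type*} [Fintype K] [DecidableEq K]
  {B : K → Type*} [∀ k, Fintype (B k)] [∀ k, DecidableEq (B k)]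

lemma siteMarg_eq_partialTraceSnd (A : Matrix (∀ k, B k) (∀ k, B k) ℂ) (k : K) :
    siteMarg A k = partialTraceSnd
      (A.submatrix (Equiv.piSplitAt k B).symm (Equiv.piSplitAt k B).symm) := by
  ext a b
  rw [siteMarg, ← (Equiv.piSplitAt k B).symm.sum_comp, Fintype.sum_prod_type]
  simp [Equiv.update_piSplitAt_symm_apply, partialTraceSnd]

lemma trace_siteMarg (A : Matrix (∀ k, B k) (∀ k, B k) ℂ) (k : K) :
    (siteMarg A k).trace = A.trace := by
  rw [siteMarg_eq_partialTraceSnd, trace_partialTraceSnd, trace_submatrix_equiv]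

lemma Matrix.PosDef.siteMarg [∀ k, Nonempty (B k)] {A : Matrix (∀ k, B k) (∀ k, B k) ℂ}
    (hA : A.PosDef) (k : K) : (siteMarg A k).PosDef := by
  rw [siteMarg_eq_partialTraceSnd]
  exact (hA.submatrix (Equiv.injective _)).partialTraceSnd

lemma siteMarg_piKron (M : ∀ k, Matrix (B k) (B k) ℂ) (k : K) :
    siteMarg (piKron M) k = (∏ j : {j // j ≠ k}, (M j).trace) • M k := by
  rw [siteMarg_eq_partialTraceSnd, piKron_submatrix_piSplitAt, partialTraceSnd_kronecker,
    trace_piKron]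

lemma trace_mul_piKron_mulSingle (A : Matrix (∀ k, B k) (∀ k, B k) ℂ) (k : K)
    (g : Matrix (B k) (B k) ℂ) :
    (A * piKron (Pi.mulSingle k g)).trace = (siteMarg A k * g).trace := by
  set σ := (Equiv.piSplitAt k B).symm
  have hrest : (piKron fun j : {j // j ≠ k} =>
      (Pi.mulSingle k g : ∀ j, Matrix (B j) (B j) ℂ) j) = 1 := by
    rw [← piKron_one]
    congr 1
    funext j
    exact Pi.mulSingle_eq_of_ne (M := fun j => Matrix (B j) (B j) ℂ) j.2 g
  calc (A * piKron (Pi.mulSingle k g)).trace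
      = (A.submatrix σ σ * (piKron (Pi.mulSingle k g)).submatrix σ σ).trace := by
        rw [submatrix_mul_equiv, trace_submatrix_equiv]
    _ = (A.submatrix σ σ * (g ⊗ₖ 1)).trace := by
        rw [piKron_submatrix_piSplitAt, Pi.mulSingle_eq_same, hrest]
    _ = (siteMarg A k * g).trace := by
        rw [trace_mul_kronecker_one, siteMarg_eq_partialTraceSnd]

lemma prodMarg_eq_piKron (A : Matrix (∀ k, B k) (∀ k, B k) ℂ) :
    prodMarg A = piKron (siteMarg A) := rfl

lemma trace_prodMarg_mul_piKron_mulSingle {A : Matrix (∀ k, B k) (∀ k, B k) ℂ}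
    (hA : A.trace = 1) (k : K) (g : Matrix (B k) (B k) ℂ) :
    (prodMarg A * piKron (Pi.mulSingle k g)).trace = (A * piKron (Pi.mulSingle k g)).trace := by
  simp only [trace_mul_piKron_mulSingle, prodMarg_eq_piKron, siteMarg_piKron, trace_siteMarg, hA,
    Finset.prod_const_one, one_smul]

end SiteMarg

section MatLog
variable {m n : Type*} [Fintype m] [DecidableEq m] [Fintype n] [DecidableEq n]

lemma matLog_eq_cfc {A : Matrix n n ℂ} (hA : A.IsHermitian) : matLog A = cfc Real.log A := by
  rw [matLog, dif_pos hA, hA.cfc_eq]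

lemma map_matLog {F : Type*} [FunLike F (Matrix m m ℂ) (Matrix n n ℂ)]
    [AlgHomClass F ℂ (Matrix m m ℂ) (Matrix n n ℂ)] [StarHomClass F (Matrix m m ℂ) (Matrix n n ℂ)]
    (φ : F) (hφ : Continuous φ) {A : Matrix m m ℂ} (hA : A.IsHermitian) :
    φ (matLog A) = matLog (φ A) := by
  rw [matLog_eq_cfc hA, matLog_eq_cfc (IsSelfAdjoint.map hA φ)]
  exact StarAlgHomClass.map_cfc (S := ℂ) φ Real.log A (A.finite_real_spectrum.continuousOn _) hφ

lemma matLog_diagonal (g : n → ℝ) :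
    matLog (diagonal fun i => (g i : ℂ)) = diagonal fun i => (Real.log (g i) : ℂ) := by
  rw [matLog_eq_cfc (by simp [IsHermitian, diagonal_conjTranspose]), cfc_diagonal]

lemma matLog_submatrix (e : m ≃ n) {A : Matrix n n ℂ} (hA : A.IsHermitian) :
    matLog (A.submatrix e e) = (matLog A).submatrix e e :=
  (map_matLog (reindexStarAlgEquiv ℂ e.symm) (continuous_id.matrix_submatrix _ _) hA).symm

end MatLog

section PiKronLog
variable {K : Type*} [Fintype K] [DecidableEq K]
  {B : K → Type*} [∀ k, Fintype (B k)] [∀ k, DecidableEq (B k)]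

lemma conjStarAlgAut_piKron (U : ∀ k, unitary (Matrix (B k) (B k) ℂ))
    (F : ∀ k, Matrix (B k) (B k) ℂ) :
    Unitary.conjStarAlgAut ℂ _ ⟨piKron fun k => (U k : Matrix (B k) (B k) ℂ),
        piKron_mem_unitary fun k => (U k).2⟩ (piKron F)
      = piKron fun k => Unitary.conjStarAlgAut ℂ _ (U k) (F k) := by
  simp [star_eq_conjTranspose, conjTranspose_piKron, piKron_mul]

lemma matLog_piKron {M : ∀ k, Matrix (B k) (B k) ℂ} (hM : ∀ k, (M k).PosDef) :
    matLog (piKron M) = ∑ k, piKron (Pi.mulSingle k (matLog (M k))) := by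
  let U k := (hM k).isHermitian.eigenvectorUnitary
  let ev k := (hM k).isHermitian.eigenvalues
  let V : unitary (Matrix (∀ k, B k) (∀ k, B k) ℂ) :=
    ⟨piKron fun k => (U k : Matrix (B k) (B k) ℂ), piKron_mem_unitary fun k => (U k).2⟩
  have hM' : piKron M
      = Unitary.conjStarAlgAut ℂ _ V (diagonal fun x => ((∏ k, ev k (x k) : ℝ) : ℂ)) := by
    push_cast
    rw [← piKron_diagonal fun k a => (ev k a : ℂ), conjStarAlgAut_piKron]
    congr 1 with k : 1
    exact (hM k).isHermitian.spectral_theorem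
  have hlog : ∀ k, matLog (M k)
      = Unitary.conjStarAlgAut ℂ _ (U k) (diagonal fun a => (Real.log (ev k a) : ℂ)) :=
    fun k => by rw [matLog, dif_pos (hM k).isHermitian]; rfl
  have hcont : Continuous (Unitary.conjStarAlgAut ℂ (Matrix (∀ k, B k) (∀ k, B k) ℂ) V) :=
    (continuous_const.mul continuous_id).mul continuous_const
  have hlogProd : (diagonal fun x => (Real.log (∏ k, ev k (x k)) : ℂ))
      = ∑ k, piKron (Pi.mulSingle k (diagonal fun a => (Real.log (ev k a) : ℂ))) := by
    ext x y
    rcases eq_or_ne x y with rfl | hxy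
    · simp only [diagonal_apply_eq, Matrix.sum_apply, piKron_mulSingle_diagonal]
      rw [Real.log_prod fun k _ => ((hM k).eigenvalues_pos _).ne', Complex.ofReal_sum]
    · simp [Matrix.sum_apply, piKron_mulSingle_diagonal, hxy]
  rw [hM', ← map_matLog _ hcont (by simp [IsHermitian, diagonal_conjTranspose]), matLog_diagonal,
    hlogProd, map_sum]
  refine Finset.sum_congr rfl fun k _ => ?_
  rw [conjStarAlgAut_piKron, hlog]
  congr 1 with j : 1
  exact Pi.apply_mulSingle (fun j => Unitary.conjStarAlgAut ℂ _ (U j)) (fun j => map_one _) k _ j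

end PiKronLog

def blockEquiv {ι κ : Type*} (d : ι → Type*) (c : ι → κ) :
    (∀ i, d i) ≃ ∀ k, ∀ i : {i // c i = k}, d i where
  toFun x _ i := x i
  invFun F i := F (c i) ⟨i, rfl⟩
  left_inv _ := rfl
  right_inv F := by
    ext k ⟨i, rfl⟩
    rfl

section Blocks
variable {ι κ : Type*} [Fintype ι] [Fintype κ] [DecidableEq κ] {d : ι → Type*} (c : ι → κ)

lemma piKron_blockEquiv {R : Type*} [CommSemiring R] (M : ∀ i, Matrix (d i) (d i) R) :
    (piKron fun k => piKron fun i : {i // c i = k} => M i).submatrix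
      (blockEquiv d c) (blockEquiv d c) = piKron M := by
  ext x y
  exact Fintype.prod_fiberwise c fun i => M i (x i) (y i)

variable [DecidableEq ι] [∀ i, DecidableEq (d i)]

lemma piKron_mulSingle_eq_blockEquiv {R : Type*} [CommSemiring R] (i : ι)
    (f : Matrix (d i) (d i) R) :
    piKron (Pi.mulSingle i f) = (piKron (Pi.mulSingle (c i)
      (piKron (Pi.mulSingle (⟨i, rfl⟩ : {j // c j = c i}) f)))).submatrix
      (blockEquiv d c) (blockEquiv d c) := by
  rw [← piKron_blockEquiv c]
  congr 2
  funext k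
  rcases eq_or_ne k (c i) with rfl | hk
  · rw [Pi.mulSingle_eq_same]
    congr 1
    exact Function.update_comp_eq_of_injective' (1 : ∀ j, Matrix (d j) (d j) R)
      Subtype.val_injective (⟨i, rfl⟩ : {j // c j = c i}) f
  · rw [Pi.mulSingle_eq_of_ne hk, ← piKron_one]
    congr 1
    funext j
    exact Pi.mulSingle_eq_of_ne (M := fun j => Matrix (d j) (d j) R)
      (fun h : j.1 = i => hk (h ▸ j.2).symm) f

variable [∀ i, Fintype (d i)] (ρ : Matrix (∀ i, d i) (∀ i, d i) ℂ)

lemma blockMargKernel_eq_siteMarg (k : κ) (x y : ∀ i, d i) :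
    blockMargKernel ρ c k x y
      = siteMarg (ρ.submatrix (blockEquiv d c).symm (blockEquiv d c).symm) k
          (blockEquiv d c x k) (blockEquiv d c y k) := by
  set E := blockEquiv d c
  rw [blockMargKernel, siteMarg, ← E.sum_comp]
  refine Finset.sum_congr rfl fun z _ => ?_
  have hcond : E z k = E x k ↔ ∀ i, c i = k → z i = x i :=
    ⟨fun h i hi => congrFun h ⟨i, hi⟩, fun h => funext fun i => h i i.2⟩
  have hupd : E.symm (Function.update (E z) k (E y k))
      = fun i => if c i = k then y i else z i := by
    funext i
    change Function.update (E z) k (E y k) (c i) ⟨i, rfl⟩ = _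
    by_cases h : c i = k
    · subst h
      rw [Function.update_self, if_pos rfl]
      rfl
    · rw [Function.update_of_ne h, if_neg h]
      rfl
  simp only [hcond, hupd, submatrix_apply, E.symm_apply_apply]

lemma prodBlockMarg_eq_submatrix :
    prodBlockMarg ρ c
      = (prodMarg (ρ.submatrix (blockEquiv d c).symm (blockEquiv d c).symm)).submatrix
          (blockEquiv d c) (blockEquiv d c) := by
  ext x y
  exact Finset.prod_congr rfl fun k _ => blockMargKernel_eq_siteMarg c ρ k x y

lemma matLog_prodBlockMarg [∀ i, Nonempty (d i)] (hρ : ρ.PosDef) :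
    matLog (prodBlockMarg ρ c) = ∑ k, (piKron (Pi.mulSingle k
      (matLog (siteMarg (ρ.submatrix (blockEquiv d c).symm (blockEquiv d c).symm) k)))).submatrix
        (blockEquiv d c) (blockEquiv d c) := by
  have hρ' := hρ.submatrix (blockEquiv d c).symm.injective
  rw [prodBlockMarg_eq_submatrix, prodMarg_eq_piKron,
    matLog_submatrix _ (isHermitian_piKron fun k => (hρ'.siteMarg k).isHermitian),
    matLog_piKron hρ'.siteMarg, submatrix_sum]

lemma trace_mul_eq_trace_prodBlockMarg_mul (hρ : ρ.trace = 1) (k : κ)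
    (g : Matrix (∀ i : {i // c i = k}, d i) (∀ i : {i // c i = k}, d i) ℂ) :
    (ρ * (piKron (Pi.mulSingle k g)).submatrix (blockEquiv d c) (blockEquiv d c)).trace
      = (prodBlockMarg ρ c
          * (piKron (Pi.mulSingle k g)).submatrix (blockEquiv d c) (blockEquiv d c)).trace := by
  rw [prodBlockMarg_eq_submatrix]
  set E := blockEquiv d c
  set ρ' := ρ.submatrix E.symm E.symm
  have hρρ' : ρ = ρ'.submatrix E E := by
    simp only [ρ', submatrix_submatrix, Equiv.symm_comp_self, submatrix_id_id]
  have hρ' : ρ'.trace = 1 := by rw [trace_submatrix_equiv, hρ]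
  conv_lhs => rw [hρρ']
  rw [submatrix_mul_equiv, submatrix_mul_equiv, trace_submatrix_equiv, trace_submatrix_equiv,
    trace_prodMarg_mul_piKron_mulSingle hρ']

end Blocks

theorem relEnt_marg_eq_markov_add_nonmarkov_general {ι κ : Type*}
    [Fintype ι] [DecidableEq ι] [Fintype κ] [DecidableEq κ]
    {d : ι → Type*} [∀ i, Fintype (d i)] [∀ i, DecidableEq (d i)] [∀ i, Nonempty (d i)]
    (ρ : Matrix ((i : ι) → d i) ((i : ι) → d i) ℂ) (hρ : ρ.PosDef) (hρtr : ρ.trace = 1)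
    (c : ι → κ) :
    relEnt ρ (prodMarg ρ)
      = relEnt (prodBlockMarg ρ c) (prodMarg ρ) + relEnt ρ (prodBlockMarg ρ c) := by
  have hlogMarg : matLog (prodMarg ρ) = ∑ i, (piKron (Pi.mulSingle (c i)
      (piKron (Pi.mulSingle (⟨i, rfl⟩ : {j // c j = c i}) (matLog (siteMarg ρ i)))))).submatrix
        (blockEquiv d c) (blockEquiv d c) := by
    rw [prodMarg_eq_piKron, matLog_piKron hρ.siteMarg]
    exact Finset.sum_congr rfl fun i _ => piKron_mulSingle_eq_blockEquiv c i _
  have hBlocks : (ρ * matLog (prodBlockMarg ρ c)).trace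
      = (prodBlockMarg ρ c * matLog (prodBlockMarg ρ c)).trace := by
    simp only [matLog_prodBlockMarg c ρ hρ, Matrix.mul_sum, trace_sum,
      trace_mul_eq_trace_prodBlockMarg_mul c ρ hρtr]
  have hMarg : (ρ * matLog (prodMarg ρ)).trace
      = (prodBlockMarg ρ c * matLog (prodMarg ρ)).trace := by
    simp only [hlogMarg, Matrix.mul_sum, trace_sum, trace_mul_eq_trace_prodBlockMarg_mul c ρ hρtr]
  simp only [relEnt, hBlocks, hMarg]
  ring

theorem relEnt_marg_eq_markov_add_nonmarkov {ι κ : Type*}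
    [Fintype ι] [DecidableEq ι] [Nonempty ι] [Fintype κ] [DecidableEq κ]
    {d : ι → Type*} [∀ i, Fintype (d i)] [∀ i, DecidableEq (d i)] [∀ i, Nonempty (d i)]
    (ρ : Matrix ((i : ι) → d i) ((i : ι) → d i) ℂ) (hρ : ρ.PosDef) (hρtr : ρ.trace = 1)
    (c : ι → κ) :
    relEnt ρ (prodMarg ρ)
      = relEnt (prodBlockMarg ρ c) (prodMarg ρ) + relEnt ρ (prodBlockMarg ρ c) :=
  relEnt_marg_eq_markov_add_nonmarkov_general ρ hρ hρtr c
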